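/- Let E_min : (0,∞) → ℝ be defined by E_min(ρ) = inf{E(v) : v ∈ H¹(ℝ^d), ‖v‖_{L²}² = ρ}, with E(u) = (1/2)‖∇u‖² − (1/2)‖u‖_{L⁴}⁴ + (1/3)‖u‖_{L⁶}⁶. Then E_min(ρ) ≥ −(3/16)ρ for every ρ > 0. -/

import Mathlib

open MeasureTheory

/-- The cubic-quintic energy of an `H¹` function on `ℝ^d`. -/
noncomputable def cqEnergy (d : ℕ) (u : (Fin d → ℝ) → ℂ) : ℝ :=
  (1/2) * (eLpNorm (fun x => fderiv ℝ u x) 2 volume).toReal ^ 2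
  - (1/2) * (eLpNorm u 4 volume).toReal ^ 4
  + (1/3) * (eLpNorm u 6 volume).toReal ^ 6

/-!
The quartic term is controlled by the mass and the sextic term: Cauchy–Schwarz applied to
`|u| · |u|³` gives `‖u‖₄⁴ ≤ ‖u‖₂ ‖u‖₆³`. Writing `x = ‖u‖₆³` and `ρ = ‖u‖₂²`, the potential part
of the energy is then at least `(1/3) x² - (1/2) ρ^{1/2} x = (1/3) (x - (3/4) ρ^{1/2})² - (3/16) ρ`,
so `E(u) ≥ (1/2) ‖∇u‖₂² - (3/16) ρ ≥ -(3/16) ρ`.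
-/

section LpInterpolation

variable {α E : Type*} {m : MeasurableSpace α} {μ : Measure α} [NormedAddCommGroup E]

theorem eLpNorm_norm_pow (v : α → E) (p : ENNReal) {n : ℕ} (hn : n ≠ 0) :
    eLpNorm (fun x => ‖v x‖ ^ n) p μ = eLpNorm v (p * n) μ ^ n := by
  simpa [Real.rpow_natCast] using eLpNorm_norm_rpow (μ := μ) (p := p) v (q := n) (by positivity)

theorem eLpNorm_four_pow_le {v : α → E} (hv : AEStronglyMeasurable v μ) :
    eLpNorm v 4 μ ^ 4 ≤ eLpNorm v 2 μ * eLpNorm v 6 μ ^ 3 := by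
  have holder := eLpNorm_smul_le_mul_eLpNorm (p := 2) (q := 2) (r := 1) (μ := μ)
    (f := fun x => ‖v x‖ ^ 3) (hv.norm.pow 3) (φ := fun x => ‖v x‖) hv.norm
  have hprod : ((fun x => ‖v x‖) • fun x => ‖v x‖ ^ 3) = fun x => ‖v x‖ ^ 4 := by
    ext x
    simp only [smul_eq_mul, Pi.mul_apply]
    ring
  rw [hprod, eLpNorm_norm_pow v 1 (by norm_num), eLpNorm_norm,
    eLpNorm_norm_pow v 2 (by norm_num)] at holder
  norm_num at holder
  exact holder

theorem toReal_eLpNorm_four_pow_le {v : α → E} (hv2 : MemLp v 2 μ) (hv6 : MemLp v 6 μ) :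
    (eLpNorm v 4 μ).toReal ^ 4 ≤ (eLpNorm v 2 μ).toReal * (eLpNorm v 6 μ).toReal ^ 3 := by
  have h := ENNReal.toReal_mono (by finiteness [hv2.eLpNorm_ne_top, hv6.eLpNorm_ne_top])
    (eLpNorm_four_pow_le hv2.aestronglyMeasurable)
  rwa [ENNReal.toReal_mul, ENNReal.toReal_pow, ENNReal.toReal_pow] at h

end LpInterpolation

theorem neg_three_div_sixteen_mul_sq_le {a b x : ℝ} (h : b ^ 4 ≤ a * x) :
    -(3/16) * a ^ 2 ≤ -(1/2) * b ^ 4 + (1/3) * x ^ 2 := by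
  nlinarith [sq_nonneg (x - (3/4) * a)]

theorem cqEnergy_ge {d : ℕ} {v : (Fin d → ℝ) → ℂ} (hv2 : MemLp v 2 volume)
    (hv6 : MemLp v 6 volume) :
    (1/2) * (eLpNorm (fun x => fderiv ℝ v x) 2 volume).toReal ^ 2
      - (3/16) * (eLpNorm v 2 volume).toReal ^ 2 ≤ cqEnergy d v := by
  have h := neg_three_div_sixteen_mul_sq_le (toReal_eLpNorm_four_pow_le hv2 hv6)
  rw [cqEnergy]
  linarith

/-- Lower bound `E_min(ρ) ≥ −(3/16)ρ` for the constrained minimal energy. -/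
theorem stmt_15 (d : ℕ) (ρ : ℝ) (hρ : 0 < ρ) :
    -(3/16) * ρ ≤ sInf {e : ℝ | ∃ v : (Fin d → ℝ) → ℂ,
      MemLp v 2 (volume : Measure (Fin d → ℝ)) ∧
      MemLp v 4 (volume : Measure (Fin d → ℝ)) ∧
      MemLp v 6 (volume : Measure (Fin d → ℝ)) ∧
      MemLp (fun x => fderiv ℝ v x) 2 (volume : Measure (Fin d → ℝ)) ∧
      (eLpNorm v 2 volume).toReal ^ 2 = ρ ∧ cqEnergy d v = e} := by
  refine Real.le_sInf ?_ (by linarith)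
  rintro _ ⟨v, hv2, -, hv6, -, rfl, rfl⟩
  have hgrad := sq_nonneg (eLpNorm (fun x => fderiv ℝ v x) 2 volume).toReal
  linarith [cqEnergy_ge hv2 hv6]
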